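/- arXiv:1912.13011 — 2 statements merged into one kernel-verified Lean document; each statement's English description precedes it below -/
import Mathlib

section
/- Let f : ℕ → ℝ be a nonnegative function, let C ≥ 1 be a natural number, let r ≥ 1 and δ ≥ 0 be real numbers with δ·r^{C} < 1, and suppose that f(C + iC + j) ≤ f(C)·δ^{i} for all natural numbers i ≥ 0 and all j with 0 ≤ j ≤ C − 1. Then ∑_{k ≥ C} f(k)·r^{k} ≤ C · f(C) · r^{2C} / (1 − δ·r^{C}). -/
/-- The slicing estimate: if `f` decays geometrically along blocks of length `C`,
i.e. `f(C + iC + j) ≤ f(C) δ^i` for `i ≥ 0`, `0 ≤ j ≤ C−1`, and `δ r^C < 1`,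
then `∑_{k ≥ C} f(k) r^k ≤ C f(C) r^{2C} / (1 − δ r^C)` (and the sum converges). -/
theorem slicing_geometric_bound
    (f : ℕ → ℝ) (hf : ∀ k, 0 ≤ f k) (C : ℕ) (hC : 1 ≤ C)
    (r δ : ℝ) (hr : 1 ≤ r) (hδ : 0 ≤ δ) (hδr : δ * r ^ C < 1)
    (hdecay : ∀ i j : ℕ, j ≤ C - 1 → f (C + i * C + j) ≤ f C * δ ^ i) :
    Summable (fun k : ℕ => if C ≤ k then f k * r ^ k else 0) ∧
    (∑' k : ℕ, if C ≤ k then f k * r ^ k else 0)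
      ≤ (C : ℝ) * f C * r ^ (2 * C) / (1 - δ * r ^ C) := by
  have hr0 : (0:ℝ) ≤ r := le_trans zero_le_one hr
  have : NeZero C := ⟨by omega⟩
  set q : ℝ := δ * r ^ C with hqdef
  have hq0 : 0 ≤ q := mul_nonneg hδ (pow_nonneg hr0 C)
  set g : ℕ → ℝ := fun k => if C ≤ k then f k * r ^ k else 0 with hgdef
  set φ : ℕ × Fin C → ℕ := fun p => C + (p.1 * C + (p.2 : ℕ)) with hφdef
  have hφinj : Function.Injective φ := by
    intro p p' h
    simp only [hφdef] at h
    have : (Nat.divModEquiv C).symm p = (Nat.divModEquiv C).symm p' := by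
      simp only [Nat.divModEquiv, Equiv.coe_fn_symm_mk]
      omega
    exact (Nat.divModEquiv C).symm.injective this
  have hrange : Function.support g ⊆ Set.range φ := by
    intro k hk
    by_cases h : C ≤ k
    · refine ⟨((k - C) / C, ⟨(k - C) % C, Nat.mod_lt _ (by omega)⟩), ?_⟩
      simp only [hφdef]
      have h1 := Nat.div_add_mod' (k - C) C
      omega
    · simp only [hgdef, Function.mem_support, if_neg h, ne_eq, not_true_eq_false] at hk
  set G : ℕ × Fin C → ℝ := fun p => g (φ p) with hGdef
  set H : ℕ × Fin C → ℝ := fun p => f C * r ^ (2 * C) * q ^ p.1 with hHdef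
  have hG0 : ∀ p, 0 ≤ G p := by
    intro p
    simp only [hGdef, hgdef]
    split
    · exact mul_nonneg (hf _) (pow_nonneg hr0 _)
    · exact le_refl 0
  have hGH : ∀ p, G p ≤ H p := by
    rintro ⟨i, j⟩
    have hk : C ≤ C + (i * C + (j : ℕ)) := by omega
    simp only [hGdef, hgdef, hHdef, hφdef, if_pos hk]
    have h1 : f (C + i * C + (j : ℕ)) ≤ f C * δ ^ i := hdecay i j (by omega)
    have h2 : r ^ (C + (i * C + (j : ℕ))) ≤ r ^ (2 * C + i * C) := by
      apply pow_le_pow_right₀ hr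
      have := j.is_lt
      omega
    calc f (C + (i * C + (j : ℕ))) * r ^ (C + (i * C + (j : ℕ)))
        ≤ (f C * δ ^ i) * r ^ (2 * C + i * C) := by
          apply mul_le_mul _ h2 (pow_nonneg hr0 _) (mul_nonneg (hf C) (pow_nonneg hδ i))
          rw [show C + (i * C + (j:ℕ)) = C + i * C + (j:ℕ) by omega]
          exact h1
      _ = f C * r ^ (2 * C) * q ^ i := by
          rw [hqdef, mul_pow, pow_add, pow_mul]
          ring
  have hH0 : ∀ p : ℕ × Fin C, 0 ≤ H p :=
    fun p => mul_nonneg (mul_nonneg (hf C) (pow_nonneg hr0 _)) (pow_nonneg hq0 _)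
  have hHsum : Summable H := by
    rw [summable_prod_of_nonneg hH0]
    constructor
    · intro i; exact Summable.of_finite
    · simp only [hHdef, tsum_fintype, Finset.sum_const, Finset.card_univ, Fintype.card_fin,
        nsmul_eq_mul]
      exact ((summable_geometric_of_lt_one hq0 hδr).mul_left _).mul_left _
  have hHtsum : ∑' p, H p = (C : ℝ) * f C * r ^ (2 * C) / (1 - q) := by
    rw [Summable.tsum_prod' hHsum (fun b => Summable.of_finite)]
    simp only [hHdef, tsum_fintype, Finset.sum_const, Finset.card_univ, Fintype.card_fin,
      nsmul_eq_mul]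
    rw [tsum_mul_left, tsum_mul_left, tsum_geometric_of_lt_one hq0 hδr]
    field_simp
  have hGsum : Summable G := Summable.of_nonneg_of_le hG0 hGH hHsum
  have hgsum : Summable g := (hφinj.summable_iff (fun k hk => by
    by_contra h
    exact hk (hrange h))).mp hGsum
  refine ⟨hgsum, ?_⟩
  have := hφinj.tsum_eq (f := g) hrange
  rw [← this]
  calc ∑' p, G p ≤ ∑' p, H p := Summable.tsum_le_tsum hGH hGsum hHsum
    _ = _ := hHtsum
end

section
/- Let (Ω, P) be a probability space, let Z : Ω → ℝ be measurable with 0 ≤ Z ≤ 1, let N : Ω → ℕ be measurable, let E ∈ [0,1] be a real number, and let m be a natural number. Then E[Z·(1−E)^{N}] ≥ (1−E)^{m} · E[Z] − sqrt( P(N > m) ) · sqrt( E[Z²] ). -/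
open MeasureTheory

section

variable {Ω : Type*} [MeasurableSpace Ω] {P : Measure Ω}

/-- Cauchy–Schwarz for `1` and `f` on `s`, followed by `∫ in s, f ^ 2 ≤ ∫ f ^ 2`. -/
theorem setIntegral_le_sqrt_measureReal_mul_sqrt_integral_sq [IsFiniteMeasure P] {f : Ω → ℝ}
    (hf0 : 0 ≤ᵐ[P] f) (hf : MemLp f 2 P) (s : Set Ω) :
    ∫ ω in s, f ω ∂P ≤ √(P.real s) * √(∫ ω, f ω ^ 2 ∂P) := by
  have holder := integral_mul_le_Lp_mul_Lq_of_nonneg (μ := P.restrict s)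
    Real.HolderConjugate.two_two (f := fun _ => (1 : ℝ)) (g := f)
    (ae_of_all _ fun _ => zero_le_one) (ae_restrict_of_ae hf0)
    (by simpa using memLp_const (μ := P.restrict s) (p := 2) (1 : ℝ))
    (by simpa using hf.restrict s)
  have hsq : ∫ ω in s, f ω ^ 2 ∂P ≤ ∫ ω, f ω ^ 2 ∂P :=
    setIntegral_le_integral (by simpa using hf.integrable_sq) (ae_of_all _ fun _ => sq_nonneg _)
  simp only [one_mul, Real.rpow_two, one_pow, setIntegral_const, smul_eq_mul, mul_one,
    ← Real.sqrt_eq_rpow] at holder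
  exact holder.trans (by gcongr)

theorem mul_integral_sub_setIntegral_le_integral {f g : Ω → ℝ} {c : ℝ} {s : Set Ω}
    (hs : MeasurableSet s) (hc1 : c ≤ 1) (hf : Integrable f P) (hg : Integrable g P)
    (hf0 : 0 ≤ᵐ[P] f) (hg0 : 0 ≤ᵐ[P] g) (hfg : ∀ ω ∈ sᶜ, c * f ω ≤ g ω) :
    c * ∫ ω, f ω ∂P - ∫ ω in s, f ω ∂P ≤ ∫ ω, g ω ∂P := by
  have hfs : 0 ≤ ∫ ω in s, f ω ∂P := setIntegral_nonneg_of_ae_restrict (ae_restrict_of_ae hf0)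
  calc c * ∫ ω, f ω ∂P - ∫ ω in s, f ω ∂P
      ≤ c * ∫ ω, f ω ∂P - c * ∫ ω in s, f ω ∂P := by
        gcongr; exact mul_le_of_le_one_left hfs hc1
    _ = ∫ ω in sᶜ, c * f ω ∂P := by
      rw [integral_const_mul, ← integral_add_compl hs hf]; ring
    _ ≤ ∫ ω in sᶜ, g ω ∂P :=
      setIntegral_mono_on (hf.const_mul c).integrableOn hg.integrableOn hs.compl hfg
    _ ≤ ∫ ω, g ω ∂P := setIntegral_le_integral hg hg0

end

/-- Key step of the abstract lower bound for the first success time: for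
`0 ≤ Z ≤ 1`, an `ℕ`-valued `N`, `E ∈ [0,1]` and `m ∈ ℕ`,
`E[Z (1−E)^N] ≥ (1−E)^m E[Z] − √(P(N > m)) √(E[Z²])`. -/
theorem lower_bound_cauchy_schwarz_split
    {Ω : Type*} [MeasurableSpace Ω] (P : Measure Ω) [IsProbabilityMeasure P]
    (Z : Ω → ℝ) (hZmeas : Measurable Z) (hZ0 : ∀ ω, 0 ≤ Z ω) (hZ1 : ∀ ω, Z ω ≤ 1)
    (N : Ω → ℕ) (hNmeas : Measurable N)
    (E : ℝ) (hE0 : 0 ≤ E) (hE1 : E ≤ 1) (m : ℕ) :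
    (1 - E) ^ m * (∫ ω, Z ω ∂P)
        - Real.sqrt ((P {ω | m < N ω}).toReal) * Real.sqrt (∫ ω, (Z ω) ^ 2 ∂P)
      ≤ ∫ ω, Z ω * (1 - E) ^ (N ω) ∂P := by
  have hq0 : 0 ≤ 1 - E := by linarith
  have hq1 : 1 - E ≤ 1 := by linarith
  have hZ : ∀ ω, Z ω ∈ Set.Icc (0 : ℝ) 1 := fun ω => ⟨hZ0 ω, hZ1 ω⟩
  have hZq : ∀ ω, Z ω * (1 - E) ^ N ω ∈ Set.Icc (0 : ℝ) 1 := fun ω =>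
    ⟨mul_nonneg (hZ0 ω) (pow_nonneg hq0 _),
      mul_le_one₀ (hZ1 ω) (pow_nonneg hq0 _) (pow_le_one₀ hq0 hq1)⟩
  have hZ2 : MemLp Z 2 P := memLp_of_bounded (ae_of_all _ hZ) hZmeas.aestronglyMeasurable 2
  have hZqi : Integrable (fun ω => Z ω * (1 - E) ^ N ω) P :=
    (memLp_of_bounded (ae_of_all _ hZq)
      (hZmeas.mul (measurable_const.pow hNmeas)).aestronglyMeasurable 1).integrable le_rfl
  have hdom : ∀ ω ∈ {ω | m < N ω}ᶜ, (1 - E) ^ m * Z ω ≤ Z ω * (1 - E) ^ N ω := fun ω hω => by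
    rw [mul_comm]
    exact mul_le_mul_of_nonneg_left (pow_le_pow_of_le_one hq0 hq1 (not_lt.mp hω)) (hZ0 ω)
  have hsplit := mul_integral_sub_setIntegral_le_integral
    (measurableSet_lt measurable_const hNmeas) (pow_le_one₀ hq0 hq1)
    (hZ2.integrable one_le_two) hZqi (ae_of_all _ hZ0) (ae_of_all _ fun ω => (hZq ω).1) hdom
  have hCS := setIntegral_le_sqrt_measureReal_mul_sqrt_integral_sq
    (ae_of_all P hZ0) hZ2 {ω | m < N ω}
  rw [measureReal_def] at hCS
  linarith
end
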